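/- With μ_3 = (1/3)∑_{i=1}^3 δ_{(i,0)}, ν_{3,n} = μ_3 P_{π/(2n)}, and c₁(x,y) = ‖x−y‖, the martingale optimal transport values satisfy lim_{n→∞} V^M_{c₁}(μ_3, ν_{3,n}) = 1 > 1/2 ≥ V^M_{c₁}(μ_3, μ_3 P_0). In particular, the value of the martingale optimal transport problem in ℝ² is not continuous under W₁-convergence of the second marginal. -/

import Mathlib

open MeasureTheory Filter
open scoped BoundedContinuousFunction ENNReal Topology

noncomputable section

/-- The plane with the Euclidean norm. -/
abbrev R2 : Type := EuclideanSpace ℝ (Fin 2)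

/-- The point `(a, b)` of the Euclidean plane. -/
def pt (a b : ℝ) : R2 := (WithLp.equiv 2 (Fin 2 → ℝ)).symm ![a, b]

/-- The unit vector at angle `θ`. -/
def dir (θ : ℝ) : R2 := pt (Real.cos θ) (Real.sin θ)

/-- The one-step kernel `P_θ` of the simple random walk along the line of angle `θ`. -/
def Pker (θ : ℝ) (x : R2) : Measure R2 :=
  (2 : ℝ≥0∞)⁻¹ • (Measure.dirac (x + dir θ) + Measure.dirac (x - dir θ))

/-- The measure `μ_m = (1/m) ∑_{i=1}^m δ_{(i,0)}`. -/
def muM (m : ℕ) : Measure R2 :=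
  (m : ℝ≥0∞)⁻¹ • ∑ i ∈ Finset.Icc 1 m, Measure.dirac (pt i 0)

/-- The coupling `μ(Id, P)` of `μ` with conditional law `P(x,·)` given `x`. -/
def couple (μ : Measure R2) (P : R2 → Measure R2) : Measure (R2 × R2) :=
  μ.bind (fun x => (P x).map (fun y => (x, y)))

/-- `π` is a coupling of `μ` and `ν`. -/
def IsCoupling {E F : Type*} [MeasurableSpace E] [MeasurableSpace F]
    (μ : Measure E) (ν : Measure F) (π : Measure (E × F)) : Prop :=
  IsProbabilityMeasure π ∧ π.map Prod.fst = μ ∧ π.map Prod.snd = ν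

/-- `π` is a martingale coupling of `μ` and `ν`: a coupling such that
`∫ φ(x)(y - x) dπ(x,y) = 0` for every bounded continuous `φ`. -/
def IsMartCoupling {E : Type*} [MeasurableSpace E] [NormedAddCommGroup E] [NormedSpace ℝ E]
    (μ ν : Measure E) (π : Measure (E × E)) : Prop :=
  IsCoupling μ ν π ∧ ∀ φ : E →ᵇ ℝ, ∫ p, φ p.1 • (p.2 - p.1) ∂π = 0

/-- The 1-Wasserstein distance: infimum of `∫ ‖x - y‖ dπ` over couplings. -/
def W1 {E : Type*} [MeasurableSpace E] [NormedAddCommGroup E] (μ ν : Measure E) : ℝ :=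
  sInf {r | ∃ π : Measure (E × E), IsCoupling μ ν π ∧ ∫ p, ‖p.1 - p.2‖ ∂π = r}

/-- The value `V^M_c(μ,ν)` of the martingale optimal transport problem. -/
def MOTval {E : Type*} [MeasurableSpace E] [NormedAddCommGroup E] [NormedSpace ℝ E]
    (c : E → E → ℝ) (μ ν : Measure E) : ℝ :=
  sInf {r | ∃ π : Measure (E × E), IsMartCoupling μ ν π ∧ ∫ p, c p.1 p.2 ∂π = r}

/-- Convex order: `∫ φ dμ ≤ ∫ φ dν` for every integrable convex `φ`. -/
def ConvexOrder {E : Type*} [MeasurableSpace E] [NormedAddCommGroup E] [NormedSpace ℝ E]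
    (μ ν : Measure E) : Prop :=
  ∀ φ : E → ℝ, ConvexOn ℝ Set.univ φ → Integrable φ ν → Integrable φ μ →
    ∫ x, φ x ∂μ ≤ ∫ x, φ x ∂ν

set_option maxHeartbeats 2000000

-- ============ point lemmas ============
lemma pt_apply0 (a b : ℝ) : pt a b 0 = a := rfl
lemma pt_apply1 (a b : ℝ) : pt a b 1 = b := rfl
lemma R2ext {x y : R2} (h0 : x 0 = y 0) (h1 : x 1 = y 1) : x = y := by
  apply PiLp.ext; intro i; fin_cases i <;> assumption
lemma pt_add (a b c d : ℝ) : pt a b + pt c d = pt (a+c) (b+d) := by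
  apply R2ext <;> rfl
lemma pt_sub (a b c d : ℝ) : pt a b - pt c d = pt (a-c) (b-d) := by
  apply R2ext <;> rfl
lemma pt_smul (r a b : ℝ) : r • pt a b = pt (r*a) (r*b) := by
  apply R2ext <;> rfl
lemma pt_neg (a b : ℝ) : -pt a b = pt (-a) (-b) := by
  apply R2ext <;> rfl
lemma pt_zero : (0 : R2) = pt 0 0 := by
  apply R2ext <;> rfl
lemma pt_inj {a b c d : ℝ} (h : pt a b = pt c d) : a = c ∧ b = d :=
  ⟨congrArg (fun v : R2 => v 0) h, congrArg (fun v : R2 => v 1) h⟩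
lemma pt_ne_fst {a b c d : ℝ} (h : a ≠ c) : pt a b ≠ pt c d := fun h' => h (pt_inj h').1
lemma pt_ne_snd {a b c d : ℝ} (h : b ≠ d) : pt a b ≠ pt c d := fun h' => h (pt_inj h').2
lemma norm_pt (a b : ℝ) : ‖pt a b‖ = Real.sqrt (a^2 + b^2) := by
  rw [EuclideanSpace.norm_eq]
  simp [Fin.sum_univ_two, pt_apply0, pt_apply1, Real.norm_eq_abs, sq_abs]
lemma dist_pt (a b c d : ℝ) : dist (pt a b) (pt c d) = Real.sqrt ((a-c)^2 + (b-d)^2) := by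
  rw [dist_eq_norm, pt_sub, norm_pt]

-- ============ bump ============
def bump (x0 : R2) : R2 →ᵇ ℝ :=
  ⟨⟨fun z => max (1 - dist z x0) 0,
    (continuous_const.sub (continuous_id.dist continuous_const)).max continuous_const⟩, by
    refine ⟨1, fun x y => ?_⟩
    have hx0 : (0:ℝ) ≤ max (1 - dist x x0) 0 := le_max_right _ _
    have hy0 : (0:ℝ) ≤ max (1 - dist y x0) 0 := le_max_right _ _
    have hx1 : max (1 - dist x x0) 0 ≤ 1 := by
      rw [max_le_iff]; exact ⟨by have := dist_nonneg (x := x) (y := x0); linarith, by norm_num⟩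
    have hy1 : max (1 - dist y x0) 0 ≤ 1 := by
      rw [max_le_iff]; exact ⟨by have := dist_nonneg (x := y) (y := x0); linarith, by norm_num⟩
    rw [Real.dist_eq, abs_le]; constructor <;> linarith⟩
lemma bump_apply (x0 z : R2) : bump x0 z = max (1 - dist z x0) 0 := rfl
lemma bump_self (x0 : R2) : bump x0 x0 = 1 := by
  rw [bump_apply]; simp
lemma bump_far {x0 z : R2} (h : 1 ≤ dist z x0) : bump x0 z = 0 := by
  rw [bump_apply]; exact max_eq_right (by linarith)

-- ============ ENNReal numerals ============
lemma enn_eq {a b : ℝ≥0∞} (ha : a ≠ ⊤) (hb : b ≠ ⊤) (h : a.toReal = b.toReal) : a = b :=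
  (ENNReal.toReal_eq_toReal_iff' ha hb).1 h
lemma inv_ne_top' {a : ℝ≥0∞} (h : a ≠ 0) : a⁻¹ ≠ ⊤ := by simp [h]

-- ============ measure rep lemmas ============
lemma rep_finset {α : Type*} [MeasurableSpace α] [MeasurableSingletonClass α]
    (π : Measure α) (S : Finset α) (h : π (↑S)ᶜ = 0) :
    π = ∑ z ∈ S, π {z} • Measure.dirac z := by
  ext s hs
  have h1 : π s = π (s ∩ ↑S) := by
    have : π (s \ ↑S) = 0 := measure_mono_null (Set.diff_subset_compl s ↑S) h
    rw [← measure_inter_add_diff s (S.measurableSet), this, add_zero]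
  classical
  rw [h1, Measure.finset_sum_apply]
  have h2 : s ∩ ↑S = ⋃ z ∈ S.filter (· ∈ s), ({z} : Set α) := by
    ext w; simp [Finset.mem_filter]; tauto
  rw [h2, measure_biUnion_finset ?_ (fun _ _ => measurableSet_singleton _)]
  · rw [Finset.sum_filter]
    congr 1; ext z
    rw [Measure.smul_apply, Measure.dirac_apply, smul_eq_mul]
    by_cases hz : z ∈ s <;> simp [hz, Set.indicator]
  · intro x _ y _ hxy
    simp [Function.onFun, Set.disjoint_singleton, hxy]

lemma integrable_dirac' {α E : Type*} [MeasurableSpace α] [MeasurableSingletonClass α]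
    [NormedAddCommGroup E] (f : α → E) (z : α) : Integrable f (Measure.dirac z) := by
  refine (integrable_const (f z)).congr ?_
  rw [Filter.EventuallyEq, MeasureTheory.ae_dirac_eq]
  exact Filter.eventually_pure.2 rfl

lemma integral_rep {α E : Type*} [MeasurableSpace α] [MeasurableSingletonClass α]
    [NormedAddCommGroup E] [NormedSpace ℝ E] [CompleteSpace E]
    (S : Finset α) (c : α → ℝ≥0∞) (hc : ∀ z ∈ S, c z ≠ ∞) (f : α → E) :
    ∫ x, f x ∂(∑ z ∈ S, c z • Measure.dirac z) = ∑ z ∈ S, (c z).toReal • f z := by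
  rw [integral_finset_sum_measure]
  · exact Finset.sum_congr rfl fun z _ => by
      rw [integral_smul_measure, integral_dirac]
  · exact fun z hz => (integrable_dirac' f z).smul_measure (hc z hz)

lemma apply_rep {α : Type*} [MeasurableSpace α] [MeasurableSingletonClass α]
    (S : Finset α) (c : α → ℝ≥0∞) (A : Set α) :
    (∑ z ∈ S, c z • Measure.dirac z) A = ∑ z ∈ S, c z * (A.indicator 1 z) := by
  rw [Measure.finset_sum_apply]
  exact Finset.sum_congr rfl fun z _ => by rw [Measure.smul_apply, Measure.dirac_apply, smul_eq_mul]

-- ============ bind lemmas ============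
lemma meas_Pker (θ : ℝ) : Measurable (Pker θ) := by
  apply Measure.measurable_of_measurable_coe
  intro s hs
  simp only [Pker, Measure.smul_apply, Measure.add_apply, Measure.dirac_apply' _ hs, smul_eq_mul]
  exact (((measurable_one.indicator hs).comp (measurable_add_const _)).add
    ((measurable_one.indicator hs).comp (measurable_sub_const _))).const_mul _

lemma meas_couple_ker (θ : ℝ) : Measurable (fun x => ((Pker θ x).map (fun y => (x, y)))) := by
  apply Measure.measurable_of_measurable_coe
  intro s hs
  have h1 : ∀ x : R2, ((Pker θ x).map (fun y => (x, y))) s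
      = 2⁻¹ * (s.indicator 1 (x, x + dir θ) + s.indicator 1 (x, x - dir θ)) := by
    intro x
    rw [Measure.map_apply measurable_prodMk_left hs]
    simp only [Pker, Measure.smul_apply, Measure.add_apply, smul_eq_mul]
    rw [Measure.dirac_apply' _ (measurable_prodMk_left hs),
        Measure.dirac_apply' _ (measurable_prodMk_left hs)]
    rfl
  simp only [h1]
  exact (((measurable_one.indicator hs).comp ((measurable_id.prodMk (measurable_add_const _)))).add
    ((measurable_one.indicator hs).comp ((measurable_id.prodMk (measurable_sub_const _))))).const_mul _

lemma bind3 {β : Type*} [MeasurableSpace β] (a b c : R2) (P : R2 → Measure β)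
    (hP : Measurable P) :
    (((3:ℝ≥0∞)⁻¹ • (Measure.dirac a + Measure.dirac b + Measure.dirac c)).bind P)
      = (3:ℝ≥0∞)⁻¹ • (P a + P b + P c) := by
  ext s hs
  have hco : Measurable (fun x : R2 => P x s) := (Measure.measurable_coe hs).comp hP
  rw [Measure.bind_apply hs hP.aemeasurable]
  rw [lintegral_smul_measure, lintegral_add_measure, lintegral_add_measure,
    lintegral_dirac' _ hco, lintegral_dirac' _ hco, lintegral_dirac' _ hco]
  simp [Measure.smul_apply, Measure.add_apply, mul_add]

lemma muM3 : muM 3 = (3:ℝ≥0∞)⁻¹ •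
    (Measure.dirac (pt 1 0) + Measure.dirac (pt 2 0) + Measure.dirac (pt 3 0)) := by
  rw [muM, show Finset.Icc 1 3 = ({1, 2, 3} : Finset ℕ) from rfl]
  rw [Finset.sum_insert (by decide), Finset.sum_insert (by decide), Finset.sum_singleton]
  norm_num [add_assoc]

-- ============ sum expansion helpers ============
lemma sum3 {α M : Type*} [DecidableEq α] [AddCommMonoid M] {a b c : α} (f : α → M)
    (h1 : a ≠ b) (h2 : a ≠ c) (h3 : b ≠ c) :
    ∑ x ∈ ({a,b,c} : Finset α), f x = f a + f b + f c := by
  rw [Finset.sum_insert (by simp [h1, h2]), Finset.sum_insert (by simp [h3]),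
    Finset.sum_singleton, add_assoc]

lemma sum6 {α M : Type*} [DecidableEq α] [AddCommMonoid M] {a b c d e g : α} (f : α → M)
    (h1 : a ≠ b) (h2 : a ≠ c) (h3 : a ≠ d) (h4 : a ≠ e) (h5 : a ≠ g)
    (h6 : b ≠ c) (h7 : b ≠ d) (h8 : b ≠ e) (h9 : b ≠ g)
    (h10 : c ≠ d) (h11 : c ≠ e) (h12 : c ≠ g)
    (h13 : d ≠ e) (h14 : d ≠ g) (h15 : e ≠ g) :
    ∑ x ∈ ({a,b,c,d,e,g} : Finset α), f x = f a + f b + f c + f d + f e + f g := by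
  rw [Finset.sum_insert (by simp [h1,h2,h3,h4,h5]), Finset.sum_insert (by simp [h6,h7,h8,h9]),
    Finset.sum_insert (by simp [h10,h11,h12]), Finset.sum_insert (by simp [h13,h14]),
    Finset.sum_insert (by simp [h15]), Finset.sum_singleton]
  simp only [add_assoc]

-- ============ seven-point measures ============
section seven
variable {α : Type*} [MeasurableSpace α] [MeasurableSingletonClass α]

def m7 (c1 c2 c3 c4 c5 c6 c7 : ℝ≥0∞) (z1 z2 z3 z4 z5 z6 z7 : α) : Measure α :=
  c1 • Measure.dirac z1 + c2 • Measure.dirac z2 + c3 • Measure.dirac z3 + c4 • Measure.dirac z4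
    + c5 • Measure.dirac z5 + c6 • Measure.dirac z6 + c7 • Measure.dirac z7

lemma m7_apply (c1 c2 c3 c4 c5 c6 c7 : ℝ≥0∞) (z1 z2 z3 z4 z5 z6 z7 : α) (A : Set α) :
    m7 c1 c2 c3 c4 c5 c6 c7 z1 z2 z3 z4 z5 z6 z7 A
      = c1 * A.indicator 1 z1 + c2 * A.indicator 1 z2 + c3 * A.indicator 1 z3
        + c4 * A.indicator 1 z4 + c5 * A.indicator 1 z5 + c6 * A.indicator 1 z6
        + c7 * A.indicator 1 z7 := by
  simp [m7, Measure.add_apply, Measure.smul_apply, Measure.dirac_apply, smul_eq_mul]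

lemma m7_map {β : Type*} [MeasurableSpace β] (c1 c2 c3 c4 c5 c6 c7 : ℝ≥0∞)
    (z1 z2 z3 z4 z5 z6 z7 : α) {f : α → β} (hf : Measurable f) :
    (m7 c1 c2 c3 c4 c5 c6 c7 z1 z2 z3 z4 z5 z6 z7).map f
      = m7 c1 c2 c3 c4 c5 c6 c7 (f z1) (f z2) (f z3) (f z4) (f z5) (f z6) (f z7) := by
  simp [m7, Measure.map_add _ _ hf, Measure.map_smul, Measure.map_dirac' hf]

lemma m7_integral {E : Type*} [NormedAddCommGroup E] [NormedSpace ℝ E] [CompleteSpace E]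
    {c1 c2 c3 c4 c5 c6 c7 : ℝ≥0∞} (h1 : c1 ≠ ⊤) (h2 : c2 ≠ ⊤) (h3 : c3 ≠ ⊤) (h4 : c4 ≠ ⊤)
    (h5 : c5 ≠ ⊤) (h6 : c6 ≠ ⊤) (h7 : c7 ≠ ⊤) (z1 z2 z3 z4 z5 z6 z7 : α) (f : α → E) :
    ∫ x, f x ∂(m7 c1 c2 c3 c4 c5 c6 c7 z1 z2 z3 z4 z5 z6 z7)
      = c1.toReal • f z1 + c2.toReal • f z2 + c3.toReal • f z3 + c4.toReal • f z4
        + c5.toReal • f z5 + c6.toReal • f z6 + c7.toReal • f z7 := by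
  have I1 := (integrable_dirac' f z1).smul_measure h1
  have I2 := (integrable_dirac' f z2).smul_measure h2
  have I3 := (integrable_dirac' f z3).smul_measure h3
  have I4 := (integrable_dirac' f z4).smul_measure h4
  have I5 := (integrable_dirac' f z5).smul_measure h5
  have I6 := (integrable_dirac' f z6).smul_measure h6
  have I7 := (integrable_dirac' f z7).smul_measure h7
  have J2 := I1.add_measure I2
  have J3 := J2.add_measure I3
  have J4 := J3.add_measure I4
  have J5 := J4.add_measure I5
  have J6 := J5.add_measure I6
  rw [m7, integral_add_measure J6 I7, integral_add_measure J5 I6, integral_add_measure J4 I5,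
    integral_add_measure J3 I4, integral_add_measure J2 I3, integral_add_measure I1 I2]
  simp only [integral_smul_measure, integral_dirac]
end seven

-- ============ ENNReal facts ============
lemma hu24 : ((24:ℝ≥0∞))⁻¹ ≠ ⊤ := inv_ne_top' (by norm_num)
lemma hmul24 (n : ℝ≥0∞) (hn : n ≠ ⊤) : n * (24:ℝ≥0∞)⁻¹ ≠ ⊤ := ENNReal.mul_ne_top hn hu24
lemma tR3 : ((3:ℝ≥0∞) * (24:ℝ≥0∞)⁻¹).toReal = 1 / 8 := by
  rw [ENNReal.toReal_mul, ENNReal.toReal_inv]; norm_num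
lemma tR4 : ((4:ℝ≥0∞) * (24:ℝ≥0∞)⁻¹).toReal = 1 / 6 := by
  rw [ENNReal.toReal_mul, ENNReal.toReal_inv]; norm_num
lemma tR8 : ((8:ℝ≥0∞) * (24:ℝ≥0∞)⁻¹).toReal = 1 / 3 := by
  rw [ENNReal.toReal_mul, ENNReal.toReal_inv]; norm_num
lemma tR1 : ((24:ℝ≥0∞)⁻¹).toReal = 1 / 24 := by
  rw [ENNReal.toReal_inv]; norm_num
lemma e3inv : (3:ℝ≥0∞)⁻¹ = 8 * (24:ℝ≥0∞)⁻¹ := by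
  refine enn_eq (inv_ne_top' (by norm_num)) (hmul24 _ (by norm_num)) ?_
  rw [ENNReal.toReal_mul, ENNReal.toReal_inv, ENNReal.toReal_inv]; norm_num
lemma e6inv : (6:ℝ≥0∞)⁻¹ = 4 * (24:ℝ≥0∞)⁻¹ := by
  refine enn_eq (inv_ne_top' (by norm_num)) (hmul24 _ (by norm_num)) ?_
  rw [ENNReal.toReal_mul, ENNReal.toReal_inv, ENNReal.toReal_inv]; norm_num
lemma e32inv : (3:ℝ≥0∞)⁻¹ * 2⁻¹ = 6⁻¹ := by
  refine enn_eq (ENNReal.mul_ne_top (inv_ne_top' (by norm_num)) (inv_ne_top' (by norm_num)))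
    (inv_ne_top' (by norm_num)) ?_
  rw [ENNReal.toReal_mul, ENNReal.toReal_inv, ENNReal.toReal_inv, ENNReal.toReal_inv]; norm_num

-- ============ nu0 ============
lemma dir_zero : dir 0 = pt 1 0 := by simp [dir]

lemma smul_half3 (M1 M2 M3 : Measure (R2)) :
    (3:ℝ≥0∞)⁻¹ • ((2:ℝ≥0∞)⁻¹ • M1 + (2:ℝ≥0∞)⁻¹ • M2 + (2:ℝ≥0∞)⁻¹ • M3)
      = (6:ℝ≥0∞)⁻¹ • (M1 + M2 + M3) := by
  rw [← smul_add, ← smul_add, smul_smul, e32inv]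

lemma nu0 : (muM 3).bind (Pker 0) = (6:ℝ≥0∞)⁻¹ •
    ((Measure.dirac (pt 2 0) + Measure.dirac (pt 0 0))
      + (Measure.dirac (pt 3 0) + Measure.dirac (pt 1 0))
      + (Measure.dirac (pt 4 0) + Measure.dirac (pt 2 0))) := by
  rw [muM3, bind3 _ _ _ _ (meas_Pker 0)]
  simp only [Pker, dir_zero, pt_add, pt_sub]
  rw [smul_half3]
  norm_num

-- ============ the optimal coupling for θ = 0 ============
def pi0 : Measure (R2 × R2) :=
  m7 (3 * (24:ℝ≥0∞)⁻¹) (4 * (24:ℝ≥0∞)⁻¹) ((24:ℝ≥0∞)⁻¹) (8 * (24:ℝ≥0∞)⁻¹) ((24:ℝ≥0∞)⁻¹)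
    (4 * (24:ℝ≥0∞)⁻¹) (3 * (24:ℝ≥0∞)⁻¹)
    (pt 1 0, pt 0 0) (pt 1 0, pt 1 0) (pt 1 0, pt 4 0) (pt 2 0, pt 2 0)
    (pt 3 0, pt 0 0) (pt 3 0, pt 3 0) (pt 3 0, pt 4 0)

lemma pi0_prob : IsProbabilityMeasure pi0 := by
  constructor
  rw [pi0, m7_apply]
  simp only [Set.indicator_univ, Pi.one_apply, mul_one]
  calc 3 * (24:ℝ≥0∞)⁻¹ + 4 * 24⁻¹ + 24⁻¹ + 8 * 24⁻¹ + 24⁻¹ + 4 * 24⁻¹ + 3 * 24⁻¹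
      = 24 * 24⁻¹ := by ring
    _ = 1 := ENNReal.mul_inv_cancel (by norm_num) (by norm_num)

lemma pi0_fst : pi0.map Prod.fst = muM 3 := by
  rw [pi0, m7_map _ _ _ _ _ _ _ _ _ _ _ _ _ _ measurable_fst, muM3]
  ext s hs
  rw [m7_apply]
  simp only [Measure.smul_apply, Measure.add_apply, Measure.dirac_apply, smul_eq_mul, e3inv]
  ring

lemma pi0_snd : pi0.map Prod.snd = (muM 3).bind (Pker 0) := by
  rw [pi0, m7_map _ _ _ _ _ _ _ _ _ _ _ _ _ _ measurable_snd, nu0]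
  ext s hs
  rw [m7_apply]
  simp only [Measure.smul_apply, Measure.add_apply, Measure.dirac_apply, smul_eq_mul, e6inv]
  ring

lemma pi0_mart : ∀ φ : R2 →ᵇ ℝ, ∫ p, φ p.1 • (p.2 - p.1) ∂pi0 = 0 := by
  intro φ
  rw [pi0, m7_integral (hmul24 _ (by norm_num)) (hmul24 _ (by norm_num)) hu24
    (hmul24 _ (by norm_num)) hu24 (hmul24 _ (by norm_num)) (hmul24 _ (by norm_num))]
  simp only [tR3, tR4, tR8, tR1]
  apply R2ext <;>
    simp only [PiLp.add_apply, PiLp.smul_apply, PiLp.zero_apply, pt_sub, pt_apply0, pt_apply1,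
      smul_eq_mul] <;> ring

lemma pi0_cost : ∫ p : R2 × R2, ‖p.1 - p.2‖ ∂pi0 = 1/2 := by
  rw [pi0, m7_integral (hmul24 _ (by norm_num)) (hmul24 _ (by norm_num)) hu24
    (hmul24 _ (by norm_num)) hu24 (hmul24 _ (by norm_num)) (hmul24 _ (by norm_num))]
  simp only [tR3, tR4, tR8, tR1, smul_eq_mul, pt_sub]
  norm_num [norm_pt]

lemma motval_bddBelow (μ ν : Measure R2) :
    BddBelow {r | ∃ π : Measure (R2 × R2), IsMartCoupling μ ν π ∧ ∫ p, ‖p.1 - p.2‖ ∂π = r} := by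
  refine ⟨0, fun r hr => ?_⟩
  obtain ⟨π, _, hint⟩ := hr
  exact hint ▸ integral_nonneg fun p => norm_nonneg _

lemma part3 : MOTval (fun x y => ‖x - y‖) (muM 3) ((muM 3).bind (Pker 0)) ≤ 1 / 2 := by
  have : MOTval (fun x y => ‖x - y‖) (muM 3) ((muM 3).bind (Pker 0))
      = sInf {r | ∃ π : Measure (R2 × R2), IsMartCoupling (muM 3) ((muM 3).bind (Pker 0)) π
        ∧ ∫ p, ‖p.1 - p.2‖ ∂π = r} := rfl
  rw [this]
  exact csInf_le (motval_bddBelow _ _)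
    ⟨pi0, ⟨⟨pi0_prob, pi0_fst, pi0_snd⟩, pi0_mart⟩, pi0_cost⟩

-- ============ six-point measures ============
section six
variable {α : Type*} [MeasurableSpace α] [MeasurableSingletonClass α]

def m6 (c0 : ℝ≥0∞) (z1 z2 z3 z4 z5 z6 : α) : Measure α :=
  c0 • Measure.dirac z1 + c0 • Measure.dirac z2 + c0 • Measure.dirac z3 + c0 • Measure.dirac z4
    + c0 • Measure.dirac z5 + c0 • Measure.dirac z6

lemma m6_apply (c0 : ℝ≥0∞) (z1 z2 z3 z4 z5 z6 : α) (A : Set α) :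
    m6 c0 z1 z2 z3 z4 z5 z6 A
      = c0 * A.indicator 1 z1 + c0 * A.indicator 1 z2 + c0 * A.indicator 1 z3
        + c0 * A.indicator 1 z4 + c0 * A.indicator 1 z5 + c0 * A.indicator 1 z6 := by
  simp [m6, Measure.add_apply, Measure.smul_apply, Measure.dirac_apply, smul_eq_mul]

omit [MeasurableSingletonClass α] in
lemma m6_map {β : Type*} [MeasurableSpace β] (c0 : ℝ≥0∞)
    (z1 z2 z3 z4 z5 z6 : α) {f : α → β} (hf : Measurable f) :
    (m6 c0 z1 z2 z3 z4 z5 z6).map f = m6 c0 (f z1) (f z2) (f z3) (f z4) (f z5) (f z6) := by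
  simp [m6, Measure.map_add _ _ hf, Measure.map_smul, Measure.map_dirac' hf]

lemma m6_integral {E : Type*} [NormedAddCommGroup E] [NormedSpace ℝ E] [CompleteSpace E]
    {c0 : ℝ≥0∞} (h0 : c0 ≠ ⊤) (z1 z2 z3 z4 z5 z6 : α) (f : α → E) :
    ∫ x, f x ∂(m6 c0 z1 z2 z3 z4 z5 z6)
      = c0.toReal • f z1 + c0.toReal • f z2 + c0.toReal • f z3 + c0.toReal • f z4
        + c0.toReal • f z5 + c0.toReal • f z6 := by
  have I : ∀ z : α, Integrable f (c0 • Measure.dirac z) :=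
    fun z => (integrable_dirac' f z).smul_measure h0
  have J2 := (I z1).add_measure (I z2)
  have J3 := J2.add_measure (I z3)
  have J4 := J3.add_measure (I z4)
  have J5 := J4.add_measure (I z5)
  rw [m6, integral_add_measure J5 (I z6), integral_add_measure J4 (I z5),
    integral_add_measure J3 (I z4), integral_add_measure J2 (I z3),
    integral_add_measure (I z1) (I z2)]
  simp only [integral_smul_measure, integral_dirac]
end six

lemma t6 : ((6:ℝ≥0∞)⁻¹).toReal = 1 / 6 := by rw [ENNReal.toReal_inv]; norm_num
lemma e36 : (3:ℝ≥0∞)⁻¹ = 2 * (6:ℝ≥0∞)⁻¹ := by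
  refine enn_eq (inv_ne_top' (by norm_num))
    (ENNReal.mul_ne_top (by norm_num) (inv_ne_top' (by norm_num))) ?_
  rw [ENNReal.toReal_mul, ENNReal.toReal_inv, ENNReal.toReal_inv]; norm_num

-- ν_θ as a six-point measure
lemma nu_theta (θ : ℝ) : (muM 3).bind (Pker θ) = m6 (6:ℝ≥0∞)⁻¹
    (pt (1 + Real.cos θ) (Real.sin θ)) (pt (1 - Real.cos θ) (-Real.sin θ))
    (pt (2 + Real.cos θ) (Real.sin θ)) (pt (2 - Real.cos θ) (-Real.sin θ))
    (pt (3 + Real.cos θ) (Real.sin θ)) (pt (3 - Real.cos θ) (-Real.sin θ)) := by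
  rw [muM3, bind3 _ _ _ _ (meas_Pker θ)]
  simp only [Pker, dir, pt_add, pt_sub]
  rw [smul_half3]
  ext s hs
  rw [m6_apply]
  simp only [Measure.smul_apply, Measure.add_apply, Measure.dirac_apply, smul_eq_mul]
  ring_nf

-- ============ canonical coupling for general θ ============
section kappa
variable (θ : ℝ)

def kappa : Measure (R2 × R2) := m6 (6:ℝ≥0∞)⁻¹
  (pt 1 0, pt (1 + Real.cos θ) (Real.sin θ)) (pt 1 0, pt (1 - Real.cos θ) (-Real.sin θ))
  (pt 2 0, pt (2 + Real.cos θ) (Real.sin θ)) (pt 2 0, pt (2 - Real.cos θ) (-Real.sin θ))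
  (pt 3 0, pt (3 + Real.cos θ) (Real.sin θ)) (pt 3 0, pt (3 - Real.cos θ) (-Real.sin θ))

lemma kappa_prob : IsProbabilityMeasure (kappa θ) := by
  constructor
  rw [kappa, m6_apply]
  simp only [Set.indicator_univ, Pi.one_apply, mul_one]
  calc (6:ℝ≥0∞)⁻¹ + 6⁻¹ + 6⁻¹ + 6⁻¹ + 6⁻¹ + 6⁻¹ = 6 * 6⁻¹ := by ring
    _ = 1 := ENNReal.mul_inv_cancel (by norm_num) (by norm_num)

lemma kappa_fst : (kappa θ).map Prod.fst = muM 3 := by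
  rw [kappa, m6_map _ _ _ _ _ _ _ measurable_fst, muM3]
  ext s hs
  rw [m6_apply]
  simp only [Measure.smul_apply, Measure.add_apply, Measure.dirac_apply, smul_eq_mul, e36]
  ring

lemma kappa_snd : (kappa θ).map Prod.snd = (muM 3).bind (Pker θ) := by
  rw [kappa, m6_map _ _ _ _ _ _ _ measurable_snd, nu_theta]

lemma kappa_mart : ∀ φ : R2 →ᵇ ℝ, ∫ p, φ p.1 • (p.2 - p.1) ∂(kappa θ) = 0 := by
  intro φ
  rw [kappa, m6_integral (inv_ne_top' (by norm_num))]
  simp only [t6]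
  apply R2ext <;>
    simp only [PiLp.add_apply, PiLp.smul_apply, PiLp.zero_apply, pt_sub, pt_apply0, pt_apply1,
      smul_eq_mul] <;> ring

lemma kappa_cost : ∫ p : R2 × R2, ‖p.1 - p.2‖ ∂(kappa θ) = 1 := by
  have hpyth := Real.cos_sq_add_sin_sq θ
  rw [kappa, m6_integral (inv_ne_top' (by norm_num))]
  simp only [t6, smul_eq_mul, pt_sub, norm_pt]
  rw [show (1 - (1 + Real.cos θ))^2 + (0 - Real.sin θ)^2 = 1 by linear_combination hpyth,
    show (1 - (1 - Real.cos θ))^2 + (0 - -Real.sin θ)^2 = 1 by linear_combination hpyth,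
    show (2 - (2 + Real.cos θ))^2 + (0 - Real.sin θ)^2 = 1 by linear_combination hpyth,
    show (2 - (2 - Real.cos θ))^2 + (0 - -Real.sin θ)^2 = 1 by linear_combination hpyth,
    show (3 - (3 + Real.cos θ))^2 + (0 - Real.sin θ)^2 = 1 by linear_combination hpyth,
    show (3 - (3 - Real.cos θ))^2 + (0 - -Real.sin θ)^2 = 1 by linear_combination hpyth,
    Real.sqrt_one]
  norm_num

lemma kappa_mem (θ : ℝ) :
    (1:ℝ) ∈ {r | ∃ π : Measure (R2 × R2), IsMartCoupling (muM 3) ((muM 3).bind (Pker θ)) π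
      ∧ ∫ p, ‖p.1 - p.2‖ ∂π = r} :=
  ⟨kappa θ, ⟨⟨kappa_prob θ, kappa_fst θ, kappa_snd θ⟩, kappa_mart θ⟩, kappa_cost θ⟩
end kappa

lemma toReal_add3 {a b c : ℝ≥0∞} (ha : a ≠ ⊤) (hb : b ≠ ⊤) (hc : c ≠ ⊤) :
    (a + b + c).toReal = a.toReal + b.toReal + c.toReal := by
  rw [ENNReal.toReal_add (ENNReal.add_ne_top.2 ⟨ha, hb⟩) hc, ENNReal.toReal_add ha hb]
lemma toReal_add6 {a b c d e f : ℝ≥0∞} (ha : a ≠ ⊤) (hb : b ≠ ⊤) (hc : c ≠ ⊤) (hd : d ≠ ⊤)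
    (he : e ≠ ⊤) (hf : f ≠ ⊤) :
    (a + b + c + d + e + f).toReal
      = a.toReal + b.toReal + c.toReal + d.toReal + e.toReal + f.toReal := by
  rw [ENNReal.toReal_add (by simp [ENNReal.add_ne_top, ha, hb, hc, hd, he]) hf,
      ENNReal.toReal_add (by simp [ENNReal.add_ne_top, ha, hb, hc, hd]) he,
      ENNReal.toReal_add (by simp [ENNReal.add_ne_top, ha, hb, hc]) hd,
      ENNReal.toReal_add (ENNReal.add_ne_top.2 ⟨ha, hb⟩) hc, ENNReal.toReal_add ha hb]

-- ============ uniqueness: any martingale coupling has cost 1 ============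
lemma cost_eq_one {θ : ℝ} (hs : Real.sin θ ≠ 0) {π : Measure (R2 × R2)} {r : ℝ}
    (hm : IsMartCoupling (muM 3) ((muM 3).bind (Pker θ)) π)
    (hint : ∫ p, ‖p.1 - p.2‖ ∂π = r) : r = 1 := by
  classical
  obtain ⟨⟨hprob, hfst, hsnd⟩, hmart⟩ := hm
  haveI := hprob
  set c := Real.cos θ with hc
  set s := Real.sin θ with hsdef
  have hpyth : c^2 + s^2 = 1 := Real.cos_sq_add_sin_sq θ
  -- points
  have hsne : s ≠ -s := fun h => hs (by linarith)
  have hsne' : -s ≠ s := fun h => hs (by linarith)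
  -- x distinctness
  have hx12 : (pt 1 0 : R2) ≠ pt 2 0 := pt_ne_fst (by norm_num)
  have hx13 : (pt 1 0 : R2) ≠ pt 3 0 := pt_ne_fst (by norm_num)
  have hx23 : (pt 2 0 : R2) ≠ pt 3 0 := pt_ne_fst (by norm_num)
  -- y distinctness
  have hy1 : (pt (1+c) s : R2) ≠ pt (1-c) (-s) := pt_ne_snd hsne
  have hy2 : (pt (1+c) s : R2) ≠ pt (2+c) s := pt_ne_fst (by intro h; linarith)
  have hy3 : (pt (1+c) s : R2) ≠ pt (2-c) (-s) := pt_ne_snd hsne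
  have hy4 : (pt (1+c) s : R2) ≠ pt (3+c) s := pt_ne_fst (by intro h; linarith)
  have hy5 : (pt (1+c) s : R2) ≠ pt (3-c) (-s) := pt_ne_snd hsne
  have hy6 : (pt (1-c) (-s) : R2) ≠ pt (2+c) s := pt_ne_snd hsne'
  have hy7 : (pt (1-c) (-s) : R2) ≠ pt (2-c) (-s) := pt_ne_fst (by intro h; linarith)
  have hy8 : (pt (1-c) (-s) : R2) ≠ pt (3+c) s := pt_ne_snd hsne'
  have hy9 : (pt (1-c) (-s) : R2) ≠ pt (3-c) (-s) := pt_ne_fst (by intro h; linarith)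
  have hy10 : (pt (2+c) s : R2) ≠ pt (2-c) (-s) := pt_ne_snd hsne
  have hy11 : (pt (2+c) s : R2) ≠ pt (3+c) s := pt_ne_fst (by intro h; linarith)
  have hy12 : (pt (2+c) s : R2) ≠ pt (3-c) (-s) := pt_ne_snd hsne
  have hy13 : (pt (2-c) (-s) : R2) ≠ pt (3+c) s := pt_ne_snd hsne'
  have hy14 : (pt (2-c) (-s) : R2) ≠ pt (3-c) (-s) := pt_ne_fst (by intro h; linarith)
  have hy15 : (pt (3+c) s : R2) ≠ pt (3-c) (-s) := pt_ne_snd hsne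
  -- support
  set X : Finset R2 := {pt 1 0, pt 2 0, pt 3 0} with hX
  set Y : Finset R2 := {pt (1+c) s, pt (1-c) (-s), pt (2+c) s, pt (2-c) (-s),
    pt (3+c) s, pt (3-c) (-s)} with hY
  have hνm : (muM 3).bind (Pker θ) = m6 (6:ℝ≥0∞)⁻¹ (pt (1+c) s) (pt (1-c) (-s))
      (pt (2+c) s) (pt (2-c) (-s)) (pt (3+c) s) (pt (3-c) (-s)) := nu_theta θ
  have hsupp : π ((↑(X ×ˢ Y) : Set (R2 × R2)))ᶜ = 0 := by
    have hsub : ((↑(X ×ˢ Y) : Set (R2 × R2)))ᶜ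
        ⊆ (Prod.fst ⁻¹' ((↑X : Set R2))ᶜ) ∪ (Prod.snd ⁻¹' ((↑Y : Set R2))ᶜ) := by
      intro z hz
      simp only [Finset.coe_product, Set.mem_compl_iff, Set.mem_prod, not_and] at hz
      simp only [Set.mem_union, Set.mem_preimage, Set.mem_compl_iff]
      tauto
    refine measure_mono_null hsub (measure_union_null ?_ ?_)
    · rw [← Measure.map_apply measurable_fst (X.measurableSet.compl), hfst, muM3]
      simp only [Measure.smul_apply, Measure.add_apply, Measure.dirac_apply, smul_eq_mul]
      rw [hX]
      simp [Set.indicator_apply]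
    · rw [← Measure.map_apply measurable_snd (Y.measurableSet.compl), hsnd, hνm, m6_apply]
      rw [hY]
      simp [Set.indicator_apply]
  have hrep := rep_finset π (X ×ˢ Y) hsupp
  -- sum expansion helpers
  have sumX : ∀ {M : Type} [AddCommMonoid M] (f : R2 → M),
      ∑ x ∈ X, f x = f (pt 1 0) + f (pt 2 0) + f (pt 3 0) :=
    fun f => sum3 f hx12 hx13 hx23
  have sumY : ∀ {M : Type} [AddCommMonoid M] (f : R2 → M),
      ∑ y ∈ Y, f y = f (pt (1+c) s) + f (pt (1-c) (-s)) + f (pt (2+c) s) + f (pt (2-c) (-s))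
        + f (pt (3+c) s) + f (pt (3-c) (-s)) :=
    fun f => sum6 f hy1 hy2 hy3 hy4 hy5 hy6 hy7 hy8 hy9 hy10 hy11 hy12 hy13 hy14 hy15
  -- row 1 equation (ENNReal)
  have hmu1 : muM 3 {(pt 1 0 : R2)} = 3⁻¹ := by
    rw [muM3]
    simp [Measure.smul_apply, Measure.add_apply, Measure.dirac_apply, Set.indicator_apply,
      Ne.symm hx12, Ne.symm hx13]
  have row1E : (3:ℝ≥0∞)⁻¹ = π {(pt 1 0, pt (1+c) s)} + π {(pt 1 0, pt (1-c) (-s))}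
      + π {(pt 1 0, pt (2+c) s)} + π {(pt 1 0, pt (2-c) (-s))}
      + π {(pt 1 0, pt (3+c) s)} + π {(pt 1 0, pt (3-c) (-s))} := by
    have e := Measure.map_apply (μ := π) measurable_fst
      (measurableSet_singleton (pt 1 0 : R2))
    rw [hfst, hmu1, hrep, apply_rep, Finset.sum_product] at e
    simp only [sumX, sumY] at e
    simpa [Set.indicator_apply, Set.mem_preimage, Set.mem_singleton_iff,
      Ne.symm hx12, Ne.symm hx13] using e
  have hmu3 : muM 3 {(pt 3 0 : R2)} = 3⁻¹ := by
    rw [muM3]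
    simp [Measure.smul_apply, Measure.add_apply, Measure.dirac_apply, Set.indicator_apply,
      hx13, hx23]
  have row3E : (3:ℝ≥0∞)⁻¹ = π {(pt 3 0, pt (1+c) s)} + π {(pt 3 0, pt (1-c) (-s))} + π {(pt 3 0, pt (2+c) s)} + π {(pt 3 0, pt (2-c) (-s))} + π {(pt 3 0, pt (3+c) s)} + π {(pt 3 0, pt (3-c) (-s))} := by
    have e := Measure.map_apply (μ := π) measurable_fst
      (measurableSet_singleton (pt 3 0 : R2))
    rw [hfst, hmu3, hrep, apply_rep, Finset.sum_product] at e
    simp only [sumX, sumY] at e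
    simpa [Set.indicator_apply, Set.mem_preimage, Set.mem_singleton_iff,
      hx13, hx23] using e
  have hnu1p : (muM 3).bind (Pker θ) {(pt (1+c) s : R2)} = 6⁻¹ := by
    rw [hνm, m6_apply]
    simp [Set.indicator_apply, Ne.symm hy1, Ne.symm hy2, Ne.symm hy3, Ne.symm hy4, Ne.symm hy5]
  have col1pE : (6:ℝ≥0∞)⁻¹ = π {(pt 1 0, pt (1+c) s)} + π {(pt 2 0, pt (1+c) s)} + π {(pt 3 0, pt (1+c) s)} := by
    have e := Measure.map_apply (μ := π) measurable_snd
      (measurableSet_singleton (pt (1+c) s : R2))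
    rw [hsnd, hnu1p, hrep, apply_rep, Finset.sum_product] at e
    simp only [sumX, sumY] at e
    simpa [Set.indicator_apply, Set.mem_preimage, Set.mem_singleton_iff,
      Ne.symm hy1, Ne.symm hy2, Ne.symm hy3, Ne.symm hy4, Ne.symm hy5] using e
  have hnu1m : (muM 3).bind (Pker θ) {(pt (1-c) (-s) : R2)} = 6⁻¹ := by
    rw [hνm, m6_apply]
    simp [Set.indicator_apply, hy1, Ne.symm hy6, Ne.symm hy7, Ne.symm hy8, Ne.symm hy9]
  have col1mE : (6:ℝ≥0∞)⁻¹ = π {(pt 1 0, pt (1-c) (-s))} + π {(pt 2 0, pt (1-c) (-s))} + π {(pt 3 0, pt (1-c) (-s))} := by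
    have e := Measure.map_apply (μ := π) measurable_snd
      (measurableSet_singleton (pt (1-c) (-s) : R2))
    rw [hsnd, hnu1m, hrep, apply_rep, Finset.sum_product] at e
    simp only [sumX, sumY] at e
    simpa [Set.indicator_apply, Set.mem_preimage, Set.mem_singleton_iff,
      hy1, Ne.symm hy6, Ne.symm hy7, Ne.symm hy8, Ne.symm hy9] using e
  have hnu2p : (muM 3).bind (Pker θ) {(pt (2+c) s : R2)} = 6⁻¹ := by
    rw [hνm, m6_apply]
    simp [Set.indicator_apply, hy2, hy6, Ne.symm hy10, Ne.symm hy11, Ne.symm hy12]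
  have col2pE : (6:ℝ≥0∞)⁻¹ = π {(pt 1 0, pt (2+c) s)} + π {(pt 2 0, pt (2+c) s)} + π {(pt 3 0, pt (2+c) s)} := by
    have e := Measure.map_apply (μ := π) measurable_snd
      (measurableSet_singleton (pt (2+c) s : R2))
    rw [hsnd, hnu2p, hrep, apply_rep, Finset.sum_product] at e
    simp only [sumX, sumY] at e
    simpa [Set.indicator_apply, Set.mem_preimage, Set.mem_singleton_iff,
      hy2, hy6, Ne.symm hy10, Ne.symm hy11, Ne.symm hy12] using e
  have hnu2m : (muM 3).bind (Pker θ) {(pt (2-c) (-s) : R2)} = 6⁻¹ := by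
    rw [hνm, m6_apply]
    simp [Set.indicator_apply, hy3, hy7, hy10, Ne.symm hy13, Ne.symm hy14]
  have col2mE : (6:ℝ≥0∞)⁻¹ = π {(pt 1 0, pt (2-c) (-s))} + π {(pt 2 0, pt (2-c) (-s))} + π {(pt 3 0, pt (2-c) (-s))} := by
    have e := Measure.map_apply (μ := π) measurable_snd
      (measurableSet_singleton (pt (2-c) (-s) : R2))
    rw [hsnd, hnu2m, hrep, apply_rep, Finset.sum_product] at e
    simp only [sumX, sumY] at e
    simpa [Set.indicator_apply, Set.mem_preimage, Set.mem_singleton_iff,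
      hy3, hy7, hy10, Ne.symm hy13, Ne.symm hy14] using e
  have hnu3p : (muM 3).bind (Pker θ) {(pt (3+c) s : R2)} = 6⁻¹ := by
    rw [hνm, m6_apply]
    simp [Set.indicator_apply, hy4, hy8, hy11, hy13, Ne.symm hy15]
  have col3pE : (6:ℝ≥0∞)⁻¹ = π {(pt 1 0, pt (3+c) s)} + π {(pt 2 0, pt (3+c) s)} + π {(pt 3 0, pt (3+c) s)} := by
    have e := Measure.map_apply (μ := π) measurable_snd
      (measurableSet_singleton (pt (3+c) s : R2))
    rw [hsnd, hnu3p, hrep, apply_rep, Finset.sum_product] at e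
    simp only [sumX, sumY] at e
    simpa [Set.indicator_apply, Set.mem_preimage, Set.mem_singleton_iff,
      hy4, hy8, hy11, hy13, Ne.symm hy15] using e
  have hnu3m : (muM 3).bind (Pker θ) {(pt (3-c) (-s) : R2)} = 6⁻¹ := by
    rw [hνm, m6_apply]
    simp [Set.indicator_apply, hy5, hy9, hy12, hy14, hy15]
  have col3mE : (6:ℝ≥0∞)⁻¹ = π {(pt 1 0, pt (3-c) (-s))} + π {(pt 2 0, pt (3-c) (-s))} + π {(pt 3 0, pt (3-c) (-s))} := by
    have e := Measure.map_apply (μ := π) measurable_snd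
      (measurableSet_singleton (pt (3-c) (-s) : R2))
    rw [hsnd, hnu3m, hrep, apply_rep, Finset.sum_product] at e
    simp only [sumX, sumY] at e
    simpa [Set.indicator_apply, Set.mem_preimage, Set.mem_singleton_iff,
      hy5, hy9, hy12, hy14, hy15] using e
  have hb21 : bump (pt 1 0) (pt 2 0) = 0 := bump_far (by
    rw [dist_pt, show ((2:ℝ)-1)^2 + ((0:ℝ)-0)^2 = 1 by norm_num, Real.sqrt_one])
  have hb31 : bump (pt 1 0) (pt 3 0) = 0 := bump_far (by
    rw [dist_pt, show ((3:ℝ)-1)^2 + ((0:ℝ)-0)^2 = 2^2 by norm_num,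
      Real.sqrt_sq (by norm_num : (0:ℝ) ≤ 2)]; norm_num)
  have hb13 : bump (pt 3 0) (pt 1 0) = 0 := bump_far (by
    rw [dist_pt, show ((1:ℝ)-3)^2 + ((0:ℝ)-0)^2 = 2^2 by norm_num,
      Real.sqrt_sq (by norm_num : (0:ℝ) ≤ 2)]; norm_num)
  have hb23 : bump (pt 3 0) (pt 2 0) = 0 := bump_far (by
    rw [dist_pt, show ((2:ℝ)-3)^2 + ((0:ℝ)-0)^2 = 1 by norm_num, Real.sqrt_one])
  have m1 := hmart (bump (pt 1 0))
  rw [hrep, integral_rep (X ×ˢ Y) (fun z => π {z}) (fun z _ => measure_ne_top π _),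
    Finset.sum_product] at m1
  simp only [sumX, sumY, bump_self, hb21, hb31, one_smul, zero_smul, smul_zero, add_zero] at m1
  have m1a := congrArg (fun v : R2 => v 0) m1
  have m1b := congrArg (fun v : R2 => v 1) m1
  simp only [PiLp.add_apply, PiLp.smul_apply, PiLp.zero_apply, pt_sub, pt_apply0,
    smul_eq_mul] at m1a
  simp only [PiLp.add_apply, PiLp.smul_apply, PiLp.zero_apply, pt_sub, pt_apply1,
    smul_eq_mul] at m1b
  have m3 := hmart (bump (pt 3 0))
  rw [hrep, integral_rep (X ×ˢ Y) (fun z => π {z}) (fun z _ => measure_ne_top π _),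
    Finset.sum_product] at m3
  simp only [sumX, sumY, bump_self, hb13, hb23, one_smul, zero_smul, smul_zero, add_zero,
    zero_add] at m3
  have m3a := congrArg (fun v : R2 => v 0) m3
  have m3b := congrArg (fun v : R2 => v 1) m3
  simp only [PiLp.add_apply, PiLp.smul_apply, PiLp.zero_apply, pt_sub, pt_apply0,
    smul_eq_mul] at m3a
  simp only [PiLp.add_apply, PiLp.smul_apply, PiLp.zero_apply, pt_sub, pt_apply1,
    smul_eq_mul] at m3b
  have t3' : ((3:ℝ≥0∞)⁻¹).toReal = 1/3 := by rw [ENNReal.toReal_inv]; norm_num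
  have r1 : (1:ℝ)/3 = (π {(pt 1 0, pt (1+c) s)}).toReal + (π {(pt 1 0, pt (1-c) (-s))}).toReal + (π {(pt 1 0, pt (2+c) s)}).toReal + (π {(pt 1 0, pt (2-c) (-s))}).toReal + (π {(pt 1 0, pt (3+c) s)}).toReal + (π {(pt 1 0, pt (3-c) (-s))}).toReal := by
    have h := congrArg ENNReal.toReal row1E
    rwa [toReal_add6 (measure_ne_top π _) (measure_ne_top π _) (measure_ne_top π _)
      (measure_ne_top π _) (measure_ne_top π _) (measure_ne_top π _), t3'] at h
  have r3 : (1:ℝ)/3 = (π {(pt 3 0, pt (1+c) s)}).toReal + (π {(pt 3 0, pt (1-c) (-s))}).toReal + (π {(pt 3 0, pt (2+c) s)}).toReal + (π {(pt 3 0, pt (2-c) (-s))}).toReal + (π {(pt 3 0, pt (3+c) s)}).toReal + (π {(pt 3 0, pt (3-c) (-s))}).toReal := by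
    have h := congrArg ENNReal.toReal row3E
    rwa [toReal_add6 (measure_ne_top π _) (measure_ne_top π _) (measure_ne_top π _)
      (measure_ne_top π _) (measure_ne_top π _) (measure_ne_top π _), t3'] at h
  have rc1p : (1:ℝ)/6 = (π {(pt 1 0, pt (1+c) s)}).toReal + (π {(pt 2 0, pt (1+c) s)}).toReal + (π {(pt 3 0, pt (1+c) s)}).toReal := by
    have h := congrArg ENNReal.toReal col1pE
    rwa [toReal_add3 (measure_ne_top π _) (measure_ne_top π _) (measure_ne_top π _), t6] at h
  have rc1m : (1:ℝ)/6 = (π {(pt 1 0, pt (1-c) (-s))}).toReal + (π {(pt 2 0, pt (1-c) (-s))}).toReal + (π {(pt 3 0, pt (1-c) (-s))}).toReal := by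
    have h := congrArg ENNReal.toReal col1mE
    rwa [toReal_add3 (measure_ne_top π _) (measure_ne_top π _) (measure_ne_top π _), t6] at h
  have rc2p : (1:ℝ)/6 = (π {(pt 1 0, pt (2+c) s)}).toReal + (π {(pt 2 0, pt (2+c) s)}).toReal + (π {(pt 3 0, pt (2+c) s)}).toReal := by
    have h := congrArg ENNReal.toReal col2pE
    rwa [toReal_add3 (measure_ne_top π _) (measure_ne_top π _) (measure_ne_top π _), t6] at h
  have rc2m : (1:ℝ)/6 = (π {(pt 1 0, pt (2-c) (-s))}).toReal + (π {(pt 2 0, pt (2-c) (-s))}).toReal + (π {(pt 3 0, pt (2-c) (-s))}).toReal := by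
    have h := congrArg ENNReal.toReal col2mE
    rwa [toReal_add3 (measure_ne_top π _) (measure_ne_top π _) (measure_ne_top π _), t6] at h
  have rc3p : (1:ℝ)/6 = (π {(pt 1 0, pt (3+c) s)}).toReal + (π {(pt 2 0, pt (3+c) s)}).toReal + (π {(pt 3 0, pt (3+c) s)}).toReal := by
    have h := congrArg ENNReal.toReal col3pE
    rwa [toReal_add3 (measure_ne_top π _) (measure_ne_top π _) (measure_ne_top π _), t6] at h
  have rc3m : (1:ℝ)/6 = (π {(pt 1 0, pt (3-c) (-s))}).toReal + (π {(pt 2 0, pt (3-c) (-s))}).toReal + (π {(pt 3 0, pt (3-c) (-s))}).toReal := by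
    have h := congrArg ENNReal.toReal col3mE
    rwa [toReal_add3 (measure_ne_top π _) (measure_ne_top π _) (measure_ne_top π _), t6] at h
  have nn : ∀ z : R2 × R2, 0 ≤ (π {z}).toReal := fun z => ENNReal.toReal_nonneg
  have hAB1 : (((π {(pt 1 0, pt (1+c) s)}).toReal + (π {(pt 1 0, pt (2+c) s)}).toReal + (π {(pt 1 0, pt (3+c) s)}).toReal) - ((π {(pt 1 0, pt (1-c) (-s))}).toReal + (π {(pt 1 0, pt (2-c) (-s))}).toReal + (π {(pt 1 0, pt (3-c) (-s))}).toReal)) * s = 0 := by linear_combination m1b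
  have hAB3 : (((π {(pt 3 0, pt (1+c) s)}).toReal + (π {(pt 3 0, pt (2+c) s)}).toReal + (π {(pt 3 0, pt (3+c) s)}).toReal) - ((π {(pt 3 0, pt (1-c) (-s))}).toReal + (π {(pt 3 0, pt (2-c) (-s))}).toReal + (π {(pt 3 0, pt (3-c) (-s))}).toReal)) * s = 0 := by linear_combination m3b
  have hD1 : ((π {(pt 1 0, pt (1+c) s)}).toReal + (π {(pt 1 0, pt (2+c) s)}).toReal + (π {(pt 1 0, pt (3+c) s)}).toReal) - ((π {(pt 1 0, pt (1-c) (-s))}).toReal + (π {(pt 1 0, pt (2-c) (-s))}).toReal + (π {(pt 1 0, pt (3-c) (-s))}).toReal) = 0 := by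
    rcases mul_eq_zero.1 hAB1 with h | h
    · exact h
    · exact absurd h hs
  have hD3 : ((π {(pt 3 0, pt (1+c) s)}).toReal + (π {(pt 3 0, pt (2+c) s)}).toReal + (π {(pt 3 0, pt (3+c) s)}).toReal) - ((π {(pt 3 0, pt (1-c) (-s))}).toReal + (π {(pt 3 0, pt (2-c) (-s))}).toReal + (π {(pt 3 0, pt (3-c) (-s))}).toReal) = 0 := by
    rcases mul_eq_zero.1 hAB3 with h | h
    · exact h
    · exact absurd h hs
  have q1 : ((π {(pt 1 0, pt (2+c) s)}).toReal + (π {(pt 1 0, pt (2-c) (-s))}).toReal) + 2*((π {(pt 1 0, pt (3+c) s)}).toReal + (π {(pt 1 0, pt (3-c) (-s))}).toReal) = 0 := by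
    linear_combination m1a - c * hD1
  have q3 : ((π {(pt 3 0, pt (2+c) s)}).toReal + (π {(pt 3 0, pt (2-c) (-s))}).toReal) + 2*((π {(pt 3 0, pt (1+c) s)}).toReal + (π {(pt 3 0, pt (1-c) (-s))}).toReal) = 0 := by
    linear_combination c * hD3 - m3a
  have z12 : (π {(pt 1 0, pt (2+c) s)}).toReal = 0 := by linarith [nn (pt 1 0, pt (2+c) s), nn (pt 1 0, pt (2-c) (-s)), nn (pt 1 0, pt (3+c) s), nn (pt 1 0, pt (3-c) (-s))]
  have z12' : (π {(pt 1 0, pt (2-c) (-s))}).toReal = 0 := by linarith [nn (pt 1 0, pt (2+c) s), nn (pt 1 0, pt (2-c) (-s)), nn (pt 1 0, pt (3+c) s), nn (pt 1 0, pt (3-c) (-s))]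
  have z13 : (π {(pt 1 0, pt (3+c) s)}).toReal = 0 := by linarith [nn (pt 1 0, pt (2+c) s), nn (pt 1 0, pt (2-c) (-s)), nn (pt 1 0, pt (3+c) s), nn (pt 1 0, pt (3-c) (-s))]
  have z13' : (π {(pt 1 0, pt (3-c) (-s))}).toReal = 0 := by linarith [nn (pt 1 0, pt (2+c) s), nn (pt 1 0, pt (2-c) (-s)), nn (pt 1 0, pt (3+c) s), nn (pt 1 0, pt (3-c) (-s))]
  have z32 : (π {(pt 3 0, pt (2+c) s)}).toReal = 0 := by linarith [nn (pt 3 0, pt (2+c) s), nn (pt 3 0, pt (2-c) (-s)), nn (pt 3 0, pt (1+c) s), nn (pt 3 0, pt (1-c) (-s))]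
  have z32' : (π {(pt 3 0, pt (2-c) (-s))}).toReal = 0 := by linarith [nn (pt 3 0, pt (2+c) s), nn (pt 3 0, pt (2-c) (-s)), nn (pt 3 0, pt (1+c) s), nn (pt 3 0, pt (1-c) (-s))]
  have z31 : (π {(pt 3 0, pt (1+c) s)}).toReal = 0 := by linarith [nn (pt 3 0, pt (2+c) s), nn (pt 3 0, pt (2-c) (-s)), nn (pt 3 0, pt (1+c) s), nn (pt 3 0, pt (1-c) (-s))]
  have z31' : (π {(pt 3 0, pt (1-c) (-s))}).toReal = 0 := by linarith [nn (pt 3 0, pt (2+c) s), nn (pt 3 0, pt (2-c) (-s)), nn (pt 3 0, pt (1+c) s), nn (pt 3 0, pt (1-c) (-s))]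
  have v11 : (π {(pt 1 0, pt (1+c) s)}).toReal = 1/6 := by linarith [hD1, r1, z12, z12', z13, z13']
  have v11' : (π {(pt 1 0, pt (1-c) (-s))}).toReal = 1/6 := by linarith [hD1, r1, z12, z12', z13, z13']
  have v33 : (π {(pt 3 0, pt (3+c) s)}).toReal = 1/6 := by linarith [hD3, r3, z32, z32', z31, z31']
  have v33' : (π {(pt 3 0, pt (3-c) (-s))}).toReal = 1/6 := by linarith [hD3, r3, z32, z32', z31, z31']
  have z21 : (π {(pt 2 0, pt (1+c) s)}).toReal = 0 := by linarith [rc1p, nn (pt 2 0, pt (1+c) s)]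
  have z21' : (π {(pt 2 0, pt (1-c) (-s))}).toReal = 0 := by linarith [rc1m, nn (pt 2 0, pt (1-c) (-s))]
  have z23 : (π {(pt 2 0, pt (3+c) s)}).toReal = 0 := by linarith [rc3p, nn (pt 2 0, pt (3+c) s)]
  have z23' : (π {(pt 2 0, pt (3-c) (-s))}).toReal = 0 := by linarith [rc3m, nn (pt 2 0, pt (3-c) (-s))]
  have v22 : (π {(pt 2 0, pt (2+c) s)}).toReal = 1/6 := by linarith [rc2p, z12, z32]
  have v22' : (π {(pt 2 0, pt (2-c) (-s))}).toReal = 1/6 := by linarith [rc2m, z12', z32']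
  -- norms
  rw [hrep, integral_rep (X ×ˢ Y) (fun z => π {z}) (fun z _ => measure_ne_top π _),
    Finset.sum_product] at hint
  simp only [sumX, sumY, smul_eq_mul, pt_sub, norm_pt] at hint
  rw [show ((1:ℝ) - (1+c))^2 + ((0:ℝ) - s)^2 = 1 by linear_combination hpyth,
    show ((1:ℝ) - (1-c))^2 + ((0:ℝ) - -s)^2 = 1 by linear_combination hpyth,
    show ((2:ℝ) - (2+c))^2 + ((0:ℝ) - s)^2 = 1 by linear_combination hpyth,
    show ((2:ℝ) - (2-c))^2 + ((0:ℝ) - -s)^2 = 1 by linear_combination hpyth,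
    show ((3:ℝ) - (3+c))^2 + ((0:ℝ) - s)^2 = 1 by linear_combination hpyth,
    show ((3:ℝ) - (3-c))^2 + ((0:ℝ) - -s)^2 = 1 by linear_combination hpyth,
    Real.sqrt_one] at hint
  rw [v11, v11', v22, v22', v33, v33', z12, z12', z13, z13', z21, z21', z23, z23',
    z31, z31', z32, z32'] at hint
  rw [← hint]; ring


lemma motval_one {θ : ℝ} (hs : Real.sin θ ≠ 0) :
    MOTval (fun x y => ‖x - y‖) (muM 3) ((muM 3).bind (Pker θ)) = 1 := by
  have hset : {r | ∃ π : Measure (R2 × R2),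
      IsMartCoupling (muM 3) ((muM 3).bind (Pker θ)) π ∧ ∫ p, ‖p.1 - p.2‖ ∂π = r}
      = {(1:ℝ)} := by
    ext r
    constructor
    · rintro ⟨π, hm, hint⟩
      exact Set.mem_singleton_iff.2 (cost_eq_one hs hm hint)
    · rintro h
      rw [Set.mem_singleton_iff] at h
      subst h
      exact kappa_mem θ
  have : MOTval (fun x y => ‖x - y‖) (muM 3) ((muM 3).bind (Pker θ))
      = sInf {r | ∃ π : Measure (R2 × R2),
        IsMartCoupling (muM 3) ((muM 3).bind (Pker θ)) π ∧ ∫ p, ‖p.1 - p.2‖ ∂π = r} := rfl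
  rw [this, hset, csInf_singleton]


/-- `lim_n V^M_{c₁}(μ_3, ν_{3,n}) = 1 > 1/2 ≥ V^M_{c₁}(μ_3, μ_3 P_0)`. -/
theorem stmt12 :
    Tendsto (fun n : ℕ =>
        MOTval (fun x y => ‖x - y‖) (muM 3) ((muM 3).bind (Pker (Real.pi / (2 * n)))))
      atTop (nhds 1)
    ∧ (1 : ℝ) > 1 / 2
    ∧ MOTval (fun x y => ‖x - y‖) (muM 3) ((muM 3).bind (Pker 0)) ≤ 1 / 2 := by
  refine ⟨?_, by norm_num, part3⟩
  have hev : (fun _ : ℕ => (1:ℝ)) =ᶠ[atTop] (fun n : ℕ =>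
      MOTval (fun x y => ‖x - y‖) (muM 3) ((muM 3).bind (Pker (Real.pi / (2 * n))))) := by
    rw [Filter.eventuallyEq_iff_exists_mem]
    refine ⟨{n | 1 ≤ n}, Filter.mem_atTop 1, fun n hn => ?_⟩
    have hn1 : (1:ℝ) ≤ (n:ℝ) := by exact_mod_cast hn
    have hpos : 0 < Real.pi / (2 * n) := by positivity
    have hle : Real.pi / (2 * n) ≤ Real.pi / 2 := by
      gcongr
      linarith
    have hlt : Real.pi / (2 * n) < Real.pi := by
      have := Real.pi_pos
      linarith
    exact (motval_one (ne_of_gt (Real.sin_pos_of_pos_of_lt_pi hpos hlt))).symm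
  exact Filter.Tendsto.congr' hev tendsto_const_nhds
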